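/- arXiv:2602.02938 — 3 statements merged into one kernel-verified Lean document; each statement's English description precedes it below -/
import Mathlib

section
/- Let ν be a unit vector in a real inner product space E and C = {w ∈ E : ⟨ν, w⟩ ≥ 0}. For every unit vector u ∈ C there exists exactly one unit vector v ∈ C such that u and v are polar (⟨u + v, w⟩ ≥ 0 for every w ∈ C), namely v = 2⟨u, ν⟩ ν − u. In particular, if ⟨u, ν⟩ = 0 then v = −u. -/
open scoped RealInnerProductSpace

/-- For every unit vector `u` in the tangent cone `C = {w : ⟪ν, w⟫ ≥ 0}` there is exactly one
unit vector `v ∈ C` polar to `u`, namely `v = 2⟪u, ν⟫ • ν - u`; in particular if `⟪u, ν⟫ = 0`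
then `v = -u`. -/
theorem stmt_2 {E : Type*} [NormedAddCommGroup E] [InnerProductSpace ℝ E]
    (ν : E) (hν : ‖ν‖ = 1) (u : E) (hu : ‖u‖ = 1) (huC : 0 ≤ ⟪ν, u⟫) :
    (∃! v : E, ‖v‖ = 1 ∧ 0 ≤ ⟪ν, v⟫ ∧ ∀ w : E, 0 ≤ ⟪ν, w⟫ → 0 ≤ ⟪u + v, w⟫) ∧
    (∀ v : E, (‖v‖ = 1 ∧ 0 ≤ ⟪ν, v⟫ ∧ ∀ w : E, 0 ≤ ⟪ν, w⟫ → 0 ≤ ⟪u + v, w⟫) ↔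
      v = (2 * ⟪u, ν⟫) • ν - u) ∧
    (⟪u, ν⟫ = 0 → (2 * ⟪u, ν⟫) • ν - u = -u) := by
  have hνν : ⟪ν, ν⟫ = 1 := by
    rw [real_inner_self_eq_norm_sq, hν]; norm_num
  have huu : ⟪u, u⟫ = 1 := by
    rw [real_inner_self_eq_norm_sq, hu]; norm_num
  have hcomm : ⟪u, ν⟫ = ⟪ν, u⟫ := real_inner_comm _ _
  have key : ∀ v : E, (‖v‖ = 1 ∧ 0 ≤ ⟪ν, v⟫ ∧ ∀ w : E, 0 ≤ ⟪ν, w⟫ → 0 ≤ ⟪u + v, w⟫) ↔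
      v = (2 * ⟪u, ν⟫) • ν - u := by
    intro v
    constructor
    · rintro ⟨hv1, hv2, hv3⟩
      set x := u + v with hx
      set c : ℝ := ⟪ν, x⟫ with hc
      have hw0 : ⟪ν, x - c • ν⟫ = 0 := by
        rw [inner_sub_right, real_inner_smul_right, hνν]; ring
      have h1 : 0 ≤ ⟪x, x - c • ν⟫ := hv3 _ (le_of_eq hw0.symm)
      have h2 : 0 ≤ ⟪x, -(x - c • ν)⟫ := hv3 _ (by rw [inner_neg_right, hw0]; norm_num)
      have h3 : ⟪x, x - c • ν⟫ = 0 := by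
        rw [inner_neg_right, neg_nonneg] at h2
        exact le_antisymm h2 h1
      have h4 : x - c • ν = 0 := by
        have h5 : ⟪x - c • ν, x - c • ν⟫ = 0 := by
          rw [inner_sub_left, real_inner_smul_left, hw0, h3]; ring
        exact inner_self_eq_zero.mp h5
      have hxc : x = c • ν := by
        have := sub_eq_zero.mp h4; exact this
      have hvx : v = c • ν - u := by
        rw [← hxc, hx]; abel
      have hvv : ⟪v, v⟫ = 1 := by
        rw [real_inner_self_eq_norm_sq, hv1]; norm_num
      have hvexp : c * c - 2 * c * ⟪ν, u⟫ + 1 = 1 := by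
        have : ⟪c • ν - u, c • ν - u⟫ = c * c - 2 * c * ⟪ν, u⟫ + 1 := by
          rw [inner_sub_left, inner_sub_right, inner_sub_right, real_inner_smul_left,
            real_inner_smul_left, real_inner_smul_right, real_inner_smul_right, hνν, huu,
            real_inner_comm u ν]
          ring
        rw [← hvx, hvv] at this
        linarith
      have hnuv : ⟪ν, v⟫ = c - ⟪ν, u⟫ := by
        rw [hvx, inner_sub_right, real_inner_smul_right, hνν]; ring
      have hceq : c = 2 * ⟪ν, u⟫ := by
        rcases mul_eq_zero.mp (by nlinarith : c * (c - 2 * ⟪ν, u⟫) = 0) with h | h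
        · have : ⟪ν, u⟫ = 0 := by
            rw [hnuv, h] at hv2; linarith
          rw [h, this]; ring
        · linarith
      rw [hvx, hceq, hcomm]
    · rintro rfl
      have hxv : u + ((2 * ⟪u, ν⟫) • ν - u) = (2 * ⟪u, ν⟫) • ν := by abel
      refine ⟨?_, ?_, ?_⟩
      · have : ⟪(2 * ⟪u, ν⟫) • ν - u, (2 * ⟪u, ν⟫) • ν - u⟫ = 1 := by
          rw [inner_sub_left, inner_sub_right, inner_sub_right, real_inner_smul_left,
            real_inner_smul_left, real_inner_smul_right, real_inner_smul_right, hνν, huu,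
            real_inner_comm u ν]
          ring
        have h := real_inner_self_eq_norm_sq ((2 * ⟪u, ν⟫) • ν - u)
        rw [this] at h
        nlinarith [norm_nonneg ((2 * ⟪u, ν⟫) • ν - u)]
      · rw [inner_sub_right, real_inner_smul_right, hνν, hcomm]
        nlinarith
      · intro w hw
        rw [hxv, real_inner_smul_left, hcomm]
        positivity
  refine ⟨?_, key, ?_⟩
  · exact ⟨(2 * ⟪u, ν⟫) • ν - u, (key _).mpr rfl, fun y hy => (key y).mp hy⟩
  · intro h
    rw [h]; simp
end

section
/- Let q = (x₀, y₀) ∈ ℝ² with x₀² + y₀² ≤ 1, let c₁(t) = (cos t, sin t), and let f_q(t) = ‖q − c₁(t)‖²/2. Then f_q is twice differentiable on ℝ with f_q''(t) = x₀ cos t + y₀ sin t, and f_q''(t) ≤ 1 for every t ∈ ℝ; equivalently, the function t ↦ t²/2 − f_q(t) is convex on ℝ. -/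
/-!
Writing `q = (a, b)`, the expansion `‖q - (cos t, sin t)‖² = a² + b² + 1 - 2 (a cos t + b sin t)`
shows that `f_q` is a constant minus the trigonometric combination `g = a cos + b sin`, and
`g'' = -g`. Hence `f_q'' = g`, and `g ≤ 1` by Cauchy–Schwarz, since `a² + b² ≤ 1`.
-/

open Real Set

noncomputable def trigComb (a b t : ℝ) : ℝ := a * cos t + b * sin t

lemma hasDerivAt_trigComb (a b t : ℝ) : HasDerivAt (trigComb a b) (trigComb b (-a) t) t := by
  rw [show trigComb b (-a) t = a * -sin t + b * cos t by simp only [trigComb]; ring]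
  exact ((hasDerivAt_cos t).const_mul a).add ((hasDerivAt_sin t).const_mul b)

lemma differentiable_trigComb (a b : ℝ) : Differentiable ℝ (trigComb a b) :=
  fun t => (hasDerivAt_trigComb a b t).differentiableAt

lemma deriv_trigComb (a b : ℝ) : deriv (trigComb a b) = trigComb b (-a) :=
  funext fun t => (hasDerivAt_trigComb a b t).deriv

lemma deriv_deriv_trigComb (a b : ℝ) : deriv (deriv (trigComb a b)) = trigComb (-a) (-b) := by
  rw [deriv_trigComb, deriv_trigComb]

lemma trigComb_le_one {a b : ℝ} (hab : a ^ 2 + b ^ 2 ≤ 1) (t : ℝ) : trigComb a b t ≤ 1 := by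
  unfold trigComb
  nlinarith [sq_nonneg (a * sin t - b * cos t), cos_sq_add_sin_sq t]

lemma half_norm_sub_cos_sin_sq (q : EuclideanSpace ℝ (Fin 2)) (t : ℝ) :
    ‖q - WithLp.toLp 2 ![cos t, sin t]‖ ^ 2 / 2
      = (q 0 ^ 2 + q 1 ^ 2 + 1) / 2 + trigComb (-q 0) (-q 1) t := by
  rw [EuclideanSpace.real_norm_sq_eq, Fin.sum_univ_two]
  simp only [PiLp.sub_apply, Matrix.cons_val_zero, Matrix.cons_val_one, trigComb]
  linear_combination (cos_sq_add_sin_sq t) / 2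

lemma convexOn_univ_mul_sq_div_two_sub {f : ℝ → ℝ} (K : ℝ) (hf : Differentiable ℝ f)
    (hf' : Differentiable ℝ (deriv f)) (hf'' : ∀ t, deriv (deriv f) t ≤ K) :
    ConvexOn ℝ univ (fun t => K * t ^ 2 / 2 - f t) := by
  have hsq (t : ℝ) : HasDerivAt (fun t => K * t ^ 2 / 2) (K * t) t :=
    (((hasDerivAt_pow 2 t).const_mul K).div_const 2).congr_deriv (by norm_num; ring)
  have hd (t : ℝ) : HasDerivAt (fun t => K * t ^ 2 / 2 - f t) (K * t - deriv f t) t :=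
    (hsq t).sub (hf t).hasDerivAt
  have hd' (t : ℝ) : HasDerivAt (fun t => K * t - deriv f t) (K - deriv (deriv f) t) t :=
    (((hasDerivAt_id' t).const_mul K).sub (hf' t).hasDerivAt).congr_deriv (by ring)
  have hderiv : deriv (fun t => K * t ^ 2 / 2 - f t) = fun t => K * t - deriv f t :=
    funext fun t => (hd t).deriv
  refine convexOn_univ_of_deriv2_nonneg (fun t => (hd t).differentiableAt)
    (hderiv ▸ fun t => (hd' t).differentiableAt) fun t => ?_
  rw [Function.iterate_succ_apply, Function.iterate_one, hderiv, (hd' t).deriv]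
  linarith [hf'' t]

/-- For `q = (x₀, y₀)` with `x₀² + y₀² ≤ 1` and `c₁(t) = (cos t, sin t)`, the function
`f_q(t) = ‖q − c₁(t)‖²/2` is twice differentiable with `f_q''(t) = x₀ cos t + y₀ sin t ≤ 1`;
equivalently `t ↦ t²/2 − f_q(t)` is convex on `ℝ`. -/
theorem stmt_12 (q : EuclideanSpace ℝ (Fin 2)) (hq : q 0 ^ 2 + q 1 ^ 2 ≤ 1)
    (c₁ : ℝ → EuclideanSpace ℝ (Fin 2))
    (hc : ∀ t, c₁ t = (WithLp.toLp 2 ![Real.cos t, Real.sin t] : EuclideanSpace ℝ (Fin 2)))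
    (fq : ℝ → ℝ) (hfq : ∀ t, fq t = ‖q - c₁ t‖ ^ 2 / 2) :
    (∀ t : ℝ, DifferentiableAt ℝ fq t ∧ DifferentiableAt ℝ (deriv fq) t) ∧
    (∀ t : ℝ, deriv (deriv fq) t = q 0 * Real.cos t + q 1 * Real.sin t) ∧
    (∀ t : ℝ, deriv (deriv fq) t ≤ 1) ∧
    ConvexOn ℝ Set.univ (fun t : ℝ => t ^ 2 / 2 - fq t) := by
  have hfq_eq : fq = fun t => (q 0 ^ 2 + q 1 ^ 2 + 1) / 2 + trigComb (-q 0) (-q 1) t :=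
    funext fun t => by rw [hfq, hc, half_norm_sub_cos_sin_sq]
  have hd : Differentiable ℝ fq := by
    rw [hfq_eq]; exact (differentiable_trigComb _ _).const_add _
  have hd' : Differentiable ℝ (deriv fq) := by
    rw [hfq_eq, deriv_const_add', deriv_trigComb]; exact differentiable_trigComb _ _
  have hd'' : deriv (deriv fq) = trigComb (q 0) (q 1) := by
    rw [hfq_eq, deriv_const_add', deriv_deriv_trigComb, neg_neg, neg_neg]
  have hle : ∀ t, deriv (deriv fq) t ≤ 1 := fun t => hd'' ▸ trigComb_le_one hq t
  refine ⟨fun t => ⟨hd t, hd' t⟩, fun t => congrFun hd'' t, hle, ?_⟩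
  simpa using convexOn_univ_mul_sq_div_two_sub 1 hd hd' hle
end

section
/- Let c₂ : [−√2, √2] → ℝ² be defined by c₂(t) = (t/√2, 1 − |t|/√2), and let q = (x₀, y₀) ∈ ℝ² with x₀² + y₀² ≤ 1. Then the function t ↦ t²/2 − ‖q − c₂(t)‖²/2 is convex on [−√2, √2]. -/
/-!
Write the curve as `c(t) = p + t • u + |t| • v` with `⟪u, v⟫ = 0` and `‖u‖² + ‖v‖² = 1`, i.e. two
unit-speed legs meeting at `p`. The quadratic terms then cancel and
`t²/2 − ‖q − c(t)‖²/2 = ⟪q − p, v⟫ |t| + (affine in t)`, which is convex as soon as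
`⟪q − p, v⟫ ≥ 0`. For `c₂` this coefficient is `(1 − y₀)/√2`, nonnegative since `q` lies in the disk.
-/

open Real RealInnerProductSpace

section Bounce

variable {E : Type*} [NormedAddCommGroup E] [InnerProductSpace ℝ E]

lemma sq_half_sub_norm_sub_bounce_sq (p q u v : E) (huv_norm : ‖u‖ ^ 2 + ‖v‖ ^ 2 = 1)
    (huv : ⟪u, v⟫ = 0) (t : ℝ) :
    t ^ 2 / 2 - ‖q - (p + t • u + |t| • v)‖ ^ 2 / 2 =
      ⟪q - p, v⟫ * |t| + (⟪q - p, u⟫ * t - ‖q - p‖ ^ 2 / 2) := by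
  have hsplit : q - (p + t • u + |t| • v) = (q - p) - (t • u + |t| • v) := by abel
  rw [hsplit, norm_sub_sq_real, norm_add_sq_real, inner_add_right, real_inner_smul_left,
    real_inner_smul_right, real_inner_smul_right, real_inner_smul_right, huv, norm_smul,
    norm_smul, Real.norm_eq_abs, Real.norm_eq_abs, abs_abs, mul_pow, mul_pow, sq_abs]
  linear_combination (-t ^ 2 / 2) * huv_norm

lemma convexOn_const_mul_abs_add_affine {c : ℝ} (hc : 0 ≤ c) (a b : ℝ) :
    ConvexOn ℝ Set.univ (fun t : ℝ => c * |t| + (a * t + b)) :=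
  ((convexOn_norm convex_univ).smul hc).add
    (((LinearMap.mul ℝ ℝ a).convexOn convex_univ).add_const b)

theorem convexOn_sq_half_sub_norm_sub_bounce_sq {p q u v : E}
    (huv_norm : ‖u‖ ^ 2 + ‖v‖ ^ 2 = 1) (huv : ⟪u, v⟫ = 0) (hq : 0 ≤ ⟪q - p, v⟫) :
    ConvexOn ℝ Set.univ (fun t : ℝ => t ^ 2 / 2 - ‖q - (p + t • u + |t| • v)‖ ^ 2 / 2) := by
  simp only [sq_half_sub_norm_sub_bounce_sq p q u v huv_norm huv]
  exact convexOn_const_mul_abs_add_affine hq _ _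

end Bounce

/-- For the bouncing curve `c₂(t) = (t/√2, 1 − |t|/√2)` and `q = (x₀, y₀)` with
`x₀² + y₀² ≤ 1`, the function `t ↦ t²/2 − ‖q − c₂(t)‖²/2` is convex on `[−√2, √2]`. -/
theorem stmt_13 (q : EuclideanSpace ℝ (Fin 2)) (hq : q 0 ^ 2 + q 1 ^ 2 ≤ 1)
    (c₂ : ℝ → EuclideanSpace ℝ (Fin 2))
    (hc : ∀ t, c₂ t =
      (WithLp.toLp 2 ![t / Real.sqrt 2, 1 - |t| / Real.sqrt 2] : EuclideanSpace ℝ (Fin 2))) :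
    ConvexOn ℝ (Set.Icc (-Real.sqrt 2) (Real.sqrt 2))
      (fun t : ℝ => t ^ 2 / 2 - ‖q - c₂ t‖ ^ 2 / 2) := by
  set p : EuclideanSpace ℝ (Fin 2) := !₂[0, 1]
  set u : EuclideanSpace ℝ (Fin 2) := !₂[1 / √2, 0]
  set v : EuclideanSpace ℝ (Fin 2) := !₂[0, -1 / √2]
  have hsqrt : √2 ^ 2 = 2 := Real.sq_sqrt zero_le_two
  have hc₂ : ∀ t, c₂ t = p + t • u + |t| • v := by
    intro t
    ext i
    fin_cases i <;> simp [hc, p, u, v] <;> ring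
  have huv_norm : ‖u‖ ^ 2 + ‖v‖ ^ 2 = 1 := by
    simp [u, v, EuclideanSpace.norm_eq, Fin.sum_univ_two, div_pow, hsqrt]
    norm_num
  have huv : ⟪u, v⟫ = 0 := by simp [u, v, PiLp.inner_apply, Fin.sum_univ_two]
  have hq₁ : q 1 ≤ 1 := by nlinarith [sq_nonneg (q 0), sq_nonneg (q 1 - 1)]
  have hqv : 0 ≤ ⟪q - p, v⟫ := by
    have hqv_eq : ⟪q - p, v⟫ = (1 - q 1) / √2 := by
      simp [p, v, PiLp.inner_apply, Fin.sum_univ_two]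
      ring
    rw [hqv_eq]
    exact div_nonneg (by linarith) (sqrt_nonneg 2)
  simp only [hc₂]
  exact (convexOn_sq_half_sub_norm_sub_bounce_sq huv_norm huv hqv).subset
    (Set.subset_univ _) (convex_Icc _ _)
end
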